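/- arXiv:2411.11290 — 4 statements merged into one kernel-verified Lean document; each statement's English description precedes it below -/
import Mathlib

section
/- Let f be an entire function and α a root of f of multiplicity k ≥ 1, so that f(z) = (z-α)^k g(z) with g analytic and g(α) ≠ 0. Then α is a fixed point of the Chebyshev map C_f with multiplier C_f'(α) = 1 - (1/(2k))·(3 - 1/k). In particular, if k = 1 then α is a superattracting fixed point (multiplier 0), and for all k ≥ 1 the multiplier has absolute value less than 1. -/
/-!
Write `f = (z - α) ^ n * g`. Then `f' = (z - α) ^ (n - 1) * (n * g + (z - α) * g')`, and applying
the same rule to `f'` gives `f''`; the powers of `z - α` cancel in the Chebyshev correction, so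
`C_f z = z - (z - α) * G z` with `G` holomorphic near `α` and `G α = (1 / (2k)) (3 - 1 / k)` for a
root of multiplicity `k`. Hence `C_f α = α` and `C_f' α = 1 - G α = (2k - 1)(k - 1) / (2k²)`, which
lies in `[0, 1)` and vanishes exactly for a simple root.
-/

/-- The Chebyshev's method iteration map applied to an entire function `f`. -/
noncomputable def chebyshev (f : ℂ → ℂ) (z : ℂ) : ℂ :=
  z - (1 + (1/2) * (f z * deriv (deriv f) z) / (deriv f z)^2) * (f z / deriv f z)

open Filter Topology

section
variable {𝕜 : Type*} [NontriviallyNormedField 𝕜]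

theorem HasDerivAt.sub_zpow_mul {h : 𝕜 → 𝕜} {h' α z : 𝕜} (n : ℤ) (hz : z ≠ α)
    (hh : HasDerivAt h h' z) :
    HasDerivAt (fun w => (w - α) ^ n * h w)
      ((z - α) ^ (n - 1) * (n * h z + (z - α) * h')) z := by
  have hu : z - α ≠ 0 := sub_ne_zero.mpr hz
  have hpow := (hasDerivAt_zpow n (z - α) (Or.inl hu)).comp z ((hasDerivAt_id z).sub_const α)
  refine (hpow.mul hh).congr_deriv ?_
  simp only [Function.comp_apply, id_eq, mul_one]
  rw [show (z - α) ^ n = (z - α) ^ (n - 1) * (z - α) by rw [← zpow_add_one₀ hu, sub_add_cancel]]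
  ring

theorem hasDerivAt_sub_sub_mul {G : 𝕜 → 𝕜} {α : 𝕜} (hG : DifferentiableAt 𝕜 G α) :
    HasDerivAt (fun z => z - (z - α) * G z) (1 - G α) α := by
  simpa using (hasDerivAt_id' α).fun_sub (((hasDerivAt_id' α).sub_const α).fun_mul hG.hasDerivAt)

noncomputable def deflatedDeriv (n α : 𝕜) (g : 𝕜 → 𝕜) (z : 𝕜) : 𝕜 :=
  n * g z + (z - α) * deriv g z

theorem deriv_sub_zpow_mul {g : 𝕜 → 𝕜} {α z : 𝕜} (n : ℤ) (hz : z ≠ α)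
    (hg : DifferentiableAt 𝕜 g z) :
    deriv (fun w => (w - α) ^ n * g w) z = (z - α) ^ (n - 1) * deflatedDeriv (n : 𝕜) α g z :=
  (hg.hasDerivAt.sub_zpow_mul n hz).deriv

end

theorem Differentiable.deflatedDeriv {g : ℂ → ℂ} (hg : Differentiable ℂ g) (n α : ℂ) :
    Differentiable ℂ (deflatedDeriv n α g) :=
  ((differentiable_const n).mul hg).add ((differentiable_id.sub_const α).mul hg.deriv)

theorem deriv_deriv_sub_zpow_mul {g : ℂ → ℂ} {α z : ℂ} (n : ℤ) (hz : z ≠ α)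
    (hg : Differentiable ℂ g) :
    deriv (deriv fun w => (w - α) ^ n * g w) z =
      (z - α) ^ (n - 1 - 1) * deflatedDeriv ((n : ℂ) - 1) α (deflatedDeriv (n : ℂ) α g) z := by
  have hderiv : deriv (fun w => (w - α) ^ n * g w) =ᶠ[𝓝 z]
      fun w => (w - α) ^ (n - 1) * deflatedDeriv (n : ℂ) α g w := by
    filter_upwards [isOpen_ne.mem_nhds hz] with w hw using deriv_sub_zpow_mul n hw (hg w)
  rw [hderiv.deriv_eq, deriv_sub_zpow_mul (n - 1) hz ((hg.deflatedDeriv n α) z), Int.cast_sub,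
    Int.cast_one]

noncomputable def chebyshevFactor (n α : ℂ) (g : ℂ → ℂ) (z : ℂ) : ℂ :=
  (1 + 1 / 2 * (g z * deflatedDeriv (n - 1) α (deflatedDeriv n α g) z) /
      deflatedDeriv n α g z ^ 2) * (g z / deflatedDeriv n α g z)

theorem chebyshev_eq_self_of_eq_zero {f : ℂ → ℂ} {z : ℂ} (hf : f z = 0) : chebyshev f z = z := by
  simp [chebyshev, hf]

theorem chebyshev_sub_zpow_mul_of_ne {g : ℂ → ℂ} {α z : ℂ} (n : ℤ) (hz : z ≠ α)
    (hg : Differentiable ℂ g) :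
    chebyshev (fun w => (w - α) ^ n * g w) z = z - (z - α) * chebyshevFactor n α g z := by
  have hu : z - α ≠ 0 := sub_ne_zero.mpr hz
  have hp : (z - α) ^ (n - 1 - 1) ≠ 0 := zpow_ne_zero _ hu
  simp only [chebyshev, chebyshevFactor, deriv_deriv_sub_zpow_mul n hz hg,
    deriv_sub_zpow_mul n hz (hg z)]
  rw [show (z - α) ^ n = (z - α) ^ (n - 1 - 1) * (z - α) * (z - α) by
      rw [← zpow_add_one₀ hu, ← zpow_add_one₀ hu]; ring_nf,
    show (z - α) ^ (n - 1) = (z - α) ^ (n - 1 - 1) * (z - α) by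
      rw [← zpow_add_one₀ hu]; ring_nf]
  -- where `f' z = 0`, both sides reduce to `z` through the junk value `x / 0 = 0`
  by_cases hD : deflatedDeriv (n : ℂ) α g z = 0
  · simp [hD]
  · field_simp

theorem chebyshev_sub_pow_mul {g : ℂ → ℂ} {α : ℂ} {k : ℕ} (hk : 1 ≤ k)
    (hg : Differentiable ℂ g) :
    chebyshev (fun w => (w - α) ^ k * g w) = fun z => z - (z - α) * chebyshevFactor k α g z := by
  funext z
  rcases eq_or_ne z α with rfl | hz
  · rw [chebyshev_eq_self_of_eq_zero (by simp [show k ≠ 0 by omega])]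
    simp
  · simpa using chebyshev_sub_zpow_mul_of_ne k hz hg

theorem differentiableAt_chebyshevFactor {g : ℂ → ℂ} {n α z : ℂ}
    (hg : Differentiable ℂ g) (hD : deflatedDeriv n α g z ≠ 0) :
    DifferentiableAt ℂ (chebyshevFactor n α g) z := by
  have h₁ := hg.deflatedDeriv n α z
  have h₂ := (hg.deflatedDeriv n α).deflatedDeriv (n - 1) α z
  unfold chebyshevFactor
  fun_prop (disch := simp [hD])

theorem chebyshevFactor_self {g : ℂ → ℂ} {n α : ℂ} (hn : n ≠ 0) (hgα : g α ≠ 0) :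
    chebyshevFactor n α g α = 1 / (2 * n) * (3 - 1 / n) := by
  simp only [chebyshevFactor, deflatedDeriv, sub_self, zero_mul, add_zero]
  field_simp
  ring

theorem norm_chebyshev_multiplier_lt_one {k : ℕ} (hk : 1 ≤ k) :
    ‖1 - 1 / (2 * (k : ℂ)) * (3 - 1 / (k : ℂ))‖ < 1 := by
  have hk' : (1 : ℝ) ≤ k := by exact_mod_cast hk
  have hreal : (1 : ℂ) - 1 / (2 * (k : ℂ)) * (3 - 1 / (k : ℂ)) =
      (((2 * k - 1) * (k - 1) / (2 * k ^ 2) : ℝ) : ℂ) := by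
    have hk₀ : (k : ℂ) ≠ 0 := Nat.cast_ne_zero.mpr (by omega)
    push_cast
    field_simp
    ring
  rw [hreal, Complex.norm_real, Real.norm_eq_abs, abs_lt, lt_div_iff₀ (by positivity),
    div_lt_iff₀ (by positivity)]
  constructor <;> nlinarith

/-- If `α` is a root of the entire function `f` of multiplicity `k ≥ 1`, i.e.
`f z = (z-α)^k * g z` with `g` entire and `g α ≠ 0`, then `α` is a fixed point of the
Chebyshev map `C_f` with multiplier `1 - (1/(2k))·(3 - 1/k)`; in particular, for
`k = 1` it is superattracting, and for all `k ≥ 1` the multiplier has modulus `< 1`. -/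
theorem chebyshev_multiplier_at_root (f g : ℂ → ℂ) (α : ℂ) (k : ℕ) (hk : 1 ≤ k)
    (hg : Differentiable ℂ g) (hgα : g α ≠ 0)
    (hf : ∀ z, f z = (z - α)^k * g z) :
    chebyshev f α = α ∧
    deriv (chebyshev f) α = 1 - (1/(2*(k:ℂ))) * (3 - 1/(k:ℂ)) ∧
    (k = 1 → deriv (chebyshev f) α = 0) ∧
    ‖deriv (chebyshev f) α‖ < 1 := by
  obtain rfl : f = fun z => (z - α) ^ k * g z := funext hf
  have hk₀ : (k : ℂ) ≠ 0 := Nat.cast_ne_zero.mpr (by omega)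
  have hD : deflatedDeriv (k : ℂ) α g α ≠ 0 := by simp [deflatedDeriv, hk₀, hgα]
  have hmult : deriv (chebyshev fun z => (z - α) ^ k * g z) α =
      1 - 1 / (2 * (k : ℂ)) * (3 - 1 / (k : ℂ)) := by
    rw [chebyshev_sub_pow_mul hk hg,
      (hasDerivAt_sub_sub_mul (differentiableAt_chebyshevFactor hg hD)).deriv,
      chebyshevFactor_self hk₀ hgα]
  refine ⟨chebyshev_eq_self_of_eq_zero (by simp [show k ≠ 0 by omega]), hmult, fun hk₁ => ?_,
    hmult ▸ norm_chebyshev_multiplier_lt_one hk⟩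
  rw [hmult, hk₁]
  norm_num
end

section
/- Let f(z) = e^{z^n} for n ≥ 2. Then the Chebyshev map of f is C_f(z) = (2n²z^{2n} - 3nz^n - n + 1)/(2n²z^{2n-1}), every extraneous fixed point of C_f satisfies z^n = (1-n)/(3n), and the multiplier of each such fixed point equals 1 + 9n/(2(n-1)); in particular all extraneous fixed points are repelling. -/
open Filter Topology Complex

theorem chebyshev_exp_comp {h h' : ℂ → ℂ} {z h'' : ℂ}
    (hh : ∀ᶠ w in 𝓝 z, HasDerivAt h (h' w) w) (hh' : HasDerivAt h' h'' z) :
    chebyshev (fun w => exp (h w)) z = z - (1 + (h' z ^ 2 + h'') / (2 * h' z ^ 2)) / h' z := by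
  have hderiv : deriv (fun w => exp (h w)) =ᶠ[𝓝 z] fun w => exp (h w) * h' w :=
    hh.mono fun w hw => hw.cexp.deriv
  have hderiv2 : deriv (deriv fun w => exp (h w)) z = exp (h z) * h' z * h' z + exp (h z) * h'' :=
    hderiv.deriv_eq.trans (hh.self_of_nhds.cexp.mul hh').deriv
  rw [chebyshev, hderiv2, hderiv.eq_of_nhds]
  -- where `h' z = 0` both sides are `z`, by `x / 0 = 0`
  rcases eq_or_ne (h' z) 0 with h0 | h0
  · simp [h0]
  · field_simp

noncomputable def chebyshevExpZpow (m : ℤ) (z : ℂ) : ℂ :=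
  z - 3 / (2 * m) * z ^ (1 - m) - (m - 1) / (2 * m ^ 2) * z ^ (1 - 2 * m)

theorem chebyshev_exp_zpow {m : ℤ} (hm : m ≠ 0) {z : ℂ} (hz : z ≠ 0) :
    chebyshev (fun w => exp (w ^ m)) z = chebyshevExpZpow m z := by
  have hpow : ∀ᶠ w in 𝓝 z, HasDerivAt (fun w : ℂ => w ^ m) (m * w ^ (m - 1)) w :=
    (eventually_ne_nhds hz).mono fun w hw => hasDerivAt_zpow m w (.inl hw)
  rw [chebyshev_exp_comp hpow ((hasDerivAt_zpow (m - 1) z (.inl hz)).const_mul _),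
    chebyshevExpZpow]
  simp only [zpow_sub₀ hz, zpow_mul', zpow_one, Int.cast_sub, Int.cast_one]
  have ht : z ^ m ≠ 0 := zpow_ne_zero m hz
  field_simp
  ring

theorem chebyshevExpZpow_natCast {n : ℕ} (hn : n ≠ 0) {z : ℂ} (hz : z ≠ 0) :
    chebyshevExpZpow n z =
      (2 * (n : ℂ) ^ 2 * z ^ (2 * n) - 3 * (n : ℂ) * z ^ n - (n : ℂ) + 1) /
        (2 * (n : ℂ) ^ 2 * z ^ (2 * n - 1)) := by
  have hn' : (n : ℂ) ≠ 0 := Nat.cast_ne_zero.mpr hn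
  rw [chebyshevExpZpow, zpow_sub₀ hz, zpow_sub₀ hz, zpow_mul', pow_sub₀ z hz (by omega),
    pow_mul']
  simp only [zpow_one, zpow_natCast, Int.cast_natCast]
  have ht : z ^ n ≠ 0 := pow_ne_zero n hz
  field_simp
  ring

theorem chebyshevExpZpow_eq_self_iff {m : ℤ} (hm : m ≠ 0) {z : ℂ} (hz : z ≠ 0) :
    chebyshevExpZpow m z = z ↔ z ^ m = (1 - m) / (3 * m) := by
  have hm' : (m : ℂ) ≠ 0 := Int.cast_ne_zero.mpr hm
  have ht : z ^ m ≠ 0 := zpow_ne_zero m hz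
  simp only [chebyshevExpZpow, zpow_sub₀ hz, zpow_mul', zpow_one]
  have hsum : 3 / (2 * m) * (z / z ^ m) + (m - 1) / (2 * m ^ 2) * (z / (z ^ m) ^ (2 : ℤ)) =
      z / (2 * m ^ 2 * (z ^ m) ^ 2) * (3 * m * z ^ m + (m - 1)) := by
    field_simp
  rw [sub_sub, sub_eq_self, hsum, mul_eq_zero, or_iff_right (by simp [hz, hm', ht]),
    eq_div_iff (by simpa)]
  constructor <;> intro h <;> linear_combination h

theorem hasDerivAt_chebyshevExpZpow (m : ℤ) {z : ℂ} (hz : z ≠ 0) :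
    HasDerivAt (chebyshevExpZpow m)
      (1 - 3 / (2 * m) * ((1 - m) * z ^ (-m))
        - (m - 1) / (2 * m ^ 2) * ((1 - 2 * m) * z ^ (-2 * m))) z := by
  have h1 := (hasDerivAt_zpow (1 - m) z (.inl hz)).const_mul (3 / (2 * (m : ℂ)))
  have h2 := (hasDerivAt_zpow (1 - 2 * m) z (.inl hz)).const_mul ((m - 1) / (2 * (m : ℂ) ^ 2))
  rw [show 1 - m - 1 = -m by ring] at h1
  rw [show 1 - 2 * m - 1 = -2 * m by ring] at h2
  exact (((hasDerivAt_id' z).sub h1).sub h2).congr_deriv (by push_cast; ring)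

theorem hasDerivAt_chebyshevExpZpow_of_zpow_eq {m : ℤ} {z : ℂ} (hz : z ≠ 0)
    (hfix : z ^ m = (1 - m) / (3 * m)) :
    HasDerivAt (chebyshevExpZpow m) (1 + 9 * m / (2 * (m - 1))) z := by
  have hne : (1 - m : ℂ) / (3 * m) ≠ 0 := hfix ▸ zpow_ne_zero m hz
  obtain ⟨hm1, hm⟩ : (1 - m : ℂ) ≠ 0 ∧ (m : ℂ) ≠ 0 := by
    simpa [div_ne_zero_iff] using hne
  refine (hasDerivAt_chebyshevExpZpow m hz).congr_deriv ?_
  rw [neg_mul, zpow_neg, zpow_neg, zpow_mul', hfix]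
  have hm1' : (m - 1 : ℂ) ≠ 0 := by rwa [← neg_sub, neg_ne_zero]
  field_simp
  ring

theorem one_lt_norm_one_add_div {x : ℝ} (hx : 1 < x) :
    1 < ‖1 + 9 * (x : ℂ) / (2 * ((x : ℂ) - 1))‖ := by
  have hpos : 0 < 9 * x / (2 * (x - 1)) := div_pos (by linarith) (by linarith)
  have hreal :
      1 + 9 * (x : ℂ) / (2 * ((x : ℂ) - 1)) = ((1 + 9 * x / (2 * (x - 1)) : ℝ) : ℂ) := by
    push_cast; rfl
  rw [hreal, norm_real, Real.norm_of_nonneg (by linarith)]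
  linarith

/-- For `f(z) = e^{z^n}` with `n ≥ 2`: the Chebyshev map is
`C_f(z) = (2n²z^{2n} - 3nz^n - n + 1)/(2n²z^{2n-1})`, every (extraneous) fixed point
satisfies `z^n = (1-n)/(3n)`, and each such fixed point has multiplier
`1 + 9n/(2(n-1))`; in particular all extraneous fixed points are repelling. -/
theorem chebyshev_exp_pow (n : ℕ) (hn : 2 ≤ n)
    (C : ℂ → ℂ) (hC : C = chebyshev (fun w => Complex.exp (w^n))) :
    (∀ z : ℂ, z ≠ 0 →
      C z = (2*(n:ℂ)^2*z^(2*n) - 3*(n:ℂ)*z^n - (n:ℂ) + 1) / (2*(n:ℂ)^2*z^(2*n-1))) ∧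
    (∀ z : ℂ, z ≠ 0 → C z = z →
      z^n = (1 - (n:ℂ)) / (3*(n:ℂ)) ∧
      deriv C z = 1 + 9*(n:ℂ) / (2*((n:ℂ) - 1)) ∧
      1 < ‖deriv C z‖) := by
  have hn0 : (n : ℤ) ≠ 0 := by omega
  have hCz : ∀ z : ℂ, z ≠ 0 → C z = chebyshevExpZpow n z := fun z hz => by
    simpa [hC] using chebyshev_exp_zpow hn0 hz
  refine ⟨fun z hz => (hCz z hz).trans (chebyshevExpZpow_natCast (by omega) hz),
    fun z hz hfix => ?_⟩
  have hpow : z ^ (n : ℤ) = (1 - (n : ℤ)) / (3 * (n : ℤ)) :=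
    (chebyshevExpZpow_eq_self_iff hn0 hz).mp ((hCz z hz).symm.trans hfix)
  have hderiv : deriv C z = 1 + 9 * (n : ℂ) / (2 * ((n : ℂ) - 1)) := by
    have hCz_near : C =ᶠ[𝓝 z] chebyshevExpZpow n := (eventually_ne_nhds hz).mono hCz
    rw [hCz_near.deriv_eq,
      (hasDerivAt_chebyshevExpZpow_of_zpow_eq hz hpow).deriv, Int.cast_natCast]
  refine ⟨by simpa using hpow, hderiv, ?_⟩
  rw [hderiv]
  simpa using one_lt_norm_one_add_div (x := n) (by exact_mod_cast hn)
end

section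
/- For n ≥ 1 and f(z) = z·e^{z^n}, the Chebyshev's method applied to f is given by the rational function C_n(z) = n·z^{n+1}·(2n²z^{2n} + 3nz^n - n + 1)/(2(nz^n + 1)³). -/
/-!
For `f(z) = z e^{z^n}` one has `f' = (n z^n + 1) e^{z^n}` and
`f'' = n z^{n-1} (n z^n + n + 1) e^{z^n}`, so the exponential factor cancels from both
`f / f'` and `f f'' / f'^2`, and what remains of Chebyshev's method is a rational identity.
-/

open Complex

theorem chebyshev_eq_of_hasDerivAt {f f' : ℂ → ℂ} {f'' z : ℂ}
    (hf : ∀ w, HasDerivAt f (f' w) w) (hf' : HasDerivAt f' f'' z) :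
    chebyshev f z = z - (1 + (1/2) * (f z * f'') / (f' z)^2) * (f z / f' z) := by
  rw [chebyshev, funext fun w => (hf w).deriv, hf'.deriv]

theorem mul_natCast_mul_pow_sub_one {R : Type*} [CommSemiring R] (n : ℕ) (z : R) :
    z * (n * z ^ (n - 1)) = n * z ^ n := by
  cases n with
  | zero => simp
  | succ n => rw [Nat.add_sub_cancel, pow_succ]; ring

theorem hasDerivAt_mul_exp_pow (n : ℕ) (z : ℂ) :
    HasDerivAt (fun w => w * exp (w ^ n)) ((n * z ^ n + 1) * exp (z ^ n)) z := by
  refine ((hasDerivAt_id' z).mul (hasDerivAt_pow n z).cexp).congr_deriv ?_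
  rw [← mul_natCast_mul_pow_sub_one]; ring

theorem hasDerivAt_natCast_mul_pow_add_one_mul_exp_pow (n : ℕ) (z : ℂ) :
    HasDerivAt (fun w => (n * w ^ n + 1) * exp (w ^ n))
      (n * z ^ (n - 1) * (n * z ^ n + n + 1) * exp (z ^ n)) z := by
  refine ((((hasDerivAt_pow n z).const_mul (n : ℂ)).add_const 1).mul
    (hasDerivAt_pow n z).cexp).congr_deriv ?_
  ring

theorem chebyshev_z_exp_pow_general (n : ℕ) :
    ∀ z : ℂ, (n:ℂ)*z^n + 1 ≠ 0 →
      chebyshev (fun w => w * Complex.exp (w^n)) z =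
        (n:ℂ) * z^(n+1) * (2*(n:ℂ)^2*z^(2*n) + 3*(n:ℂ)*z^n - (n:ℂ) + 1) /
          (2 * ((n:ℂ)*z^n + 1)^3) := by
  intro z hz
  rw [chebyshev_eq_of_hasDerivAt (hasDerivAt_mul_exp_pow n)
    (hasDerivAt_natCast_mul_pow_add_one_mul_exp_pow n z)]
  have hexp : exp (z ^ n) ≠ 0 := exp_ne_zero _
  have hpow := mul_natCast_mul_pow_sub_one n z
  rw [pow_succ' z n, mul_comm 2 n, pow_mul]
  generalize (n : ℂ) * z ^ (n - 1) = s at hpow ⊢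
  generalize z ^ n = t at hz hpow ⊢
  field_simp
  linear_combination (-z * (n * (t + 1) + 1)) * hpow

/-- For `n ≥ 1` and `f(z) = z·e^{z^n}`, the Chebyshev's method applied to `f` is the
rational map `C_n(z) = n·z^{n+1}·(2n²z^{2n} + 3nz^n - n + 1)/(2(nz^n + 1)³)`. -/
theorem chebyshev_z_exp_pow (n : ℕ) (hn : 1 ≤ n) :
    ∀ z : ℂ, (n:ℂ)*z^n + 1 ≠ 0 →
      chebyshev (fun w => w * Complex.exp (w^n)) z =
        (n:ℂ) * z^(n+1) * (2*(n:ℂ)^2*z^(2*n) + 3*(n:ℂ)*z^n - (n:ℂ) + 1) /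
          (2 * ((n:ℂ)*z^n + 1)^3) :=
  chebyshev_z_exp_pow_general n
end

section
/- For n ≥ 2, the cubic polynomial F(w) = 2n³w³ + n²(3n+5)w² + n(2n²+3n+4)w - (n²-1) has exactly one real root r, and r lies in the open interval (0,1); the other two roots are non-real complex conjugates. -/
/-!
`F(0) = 1 - n² < 0 < F(1)`, so the intermediate value theorem gives a real root `r ∈ (0, 1)`.
Dividing `F` by `w - r` leaves a real quadratic of discriminant
`-(n⁴(7n² - 6n + 7) + 4n⁵(3n + 5)r + 12n⁶r²) < 0`, whose roots are therefore a pair of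
non-real complex conjugates.
-/

open Complex ComplexConjugate

lemma exists_quadratic_eq_zero_iff_eq_or_eq_conj {a b c : ℝ} (ha : a ≠ 0)
    (hd : discrim a b c < 0) :
    ∃ w : ℂ, w.im ≠ 0 ∧ ∀ z : ℂ, (a : ℂ) * (z * z) + b * z + c = 0 ↔ z = w ∨ z = conj w := by
  obtain ⟨t, ht, htsq⟩ : ∃ t : ℝ, 0 < t ∧ t ^ 2 = -discrim a b c :=
    ⟨√(-discrim a b c), Real.sqrt_pos.mpr (neg_pos.mpr hd), Real.sq_sqrt (neg_pos.mpr hd).le⟩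
  have hs : discrim (a : ℂ) b c = (t * I) * (t * I) := by
    have htsqC : (t : ℂ) ^ 2 = -discrim (a : ℂ) b c := by
      simp only [discrim] at htsq ⊢; exact_mod_cast htsq
    linear_combination htsqC - (t : ℂ) ^ 2 * I_sq
  refine ⟨(-b + t * I) / (2 * a), ?_, fun z => ?_⟩
  · have : ((-b + t * I) / (2 * a)).im = t / (2 * a) := by
      rw [← ofReal_ofNat, ← ofReal_mul, div_ofReal_im]; simp
    rw [this]; exact div_ne_zero ht.ne' (mul_ne_zero two_ne_zero ha)
  · rw [quadratic_eq_zero_iff (by exact_mod_cast ha) hs]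
    have : conj ((-b + t * I) / (2 * a)) = (-b - t * I) / (2 * a) := by
      simp only [map_div₀, map_add, map_neg, map_mul, map_ofNat, conj_ofReal, conj_I]
      ring
    rw [this]

lemma cubic_eq_sub_mul_quadratic {R : Type*} [CommRing R] {a b c d r : R}
    (hr : a * r ^ 3 + b * r ^ 2 + c * r + d = 0) (z : R) :
    a * z ^ 3 + b * z ^ 2 + c * z + d
      = (z - r) * (a * (z * z) + (b + a * r) * z + (c + b * r + a * r ^ 2)) := by
  linear_combination hr

lemma exists_cubic_eq_zero_iff_of_discrim_neg {a b c d r : ℝ} (ha : a ≠ 0)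
    (hr : a * r ^ 3 + b * r ^ 2 + c * r + d = 0)
    (hd : discrim a (b + a * r) (c + b * r + a * r ^ 2) < 0) :
    ∃ w : ℂ, w.im ≠ 0 ∧ ∀ z : ℂ,
      (a : ℂ) * z ^ 3 + b * z ^ 2 + c * z + d = 0 ↔ z = r ∨ z = w ∨ z = conj w := by
  obtain ⟨w, hw, hquad⟩ := exists_quadratic_eq_zero_iff_eq_or_eq_conj ha hd
  refine ⟨w, hw, fun z => ?_⟩
  have hrC : (a : ℂ) * (r : ℂ) ^ 3 + b * (r : ℂ) ^ 2 + c * r + d = 0 := by exact_mod_cast hr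
  rw [cubic_eq_sub_mul_quadratic hrC, mul_eq_zero, sub_eq_zero, ← hquad z]
  push_cast
  rfl

section

variable {x : ℝ}

lemma exists_critical_root_mem_Ioo (hx : 1 < x) :
    ∃ r ∈ Set.Ioo (0 : ℝ) 1,
      2 * x ^ 3 * r ^ 3 + x ^ 2 * (3 * x + 5) * r ^ 2 + x * (2 * x ^ 2 + 3 * x + 4) * r
        + -(x ^ 2 - 1) = 0 := by
  refine intermediate_value_Ioo (f := fun w => 2 * x ^ 3 * w ^ 3 + x ^ 2 * (3 * x + 5) * w ^ 2
    + x * (2 * x ^ 2 + 3 * x + 4) * w + -(x ^ 2 - 1)) zero_le_one (by fun_prop) ⟨?_, ?_⟩ <;>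
  nlinarith

lemma discrim_critical_cofactor_neg (hx : 0 < x) {r : ℝ} (hr : 0 ≤ r) :
    discrim (2 * x ^ 3) (x ^ 2 * (3 * x + 5) + 2 * x ^ 3 * r)
      (x * (2 * x ^ 2 + 3 * x + 4) + x ^ 2 * (3 * x + 5) * r + 2 * x ^ 3 * r ^ 2) < 0 := by
  have h7 : 0 < 7 * x ^ 2 - 6 * x + 7 := by nlinarith [sq_nonneg (x - 1)]
  have hpos : 0 < x ^ 4 * (7 * x ^ 2 - 6 * x + 7) + 4 * x ^ 5 * (3 * x + 5) * r
      + 12 * x ^ 6 * r ^ 2 := by positivity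
  unfold discrim
  linarith

end

/-- For `n ≥ 2`, the cubic `F(w) = 2n³w³ + n²(3n+5)w² + n(2n²+3n+4)w - (n²-1)` has
exactly one real root `r`, with `r ∈ (0,1)`, and its other two roots are non-real
complex conjugates of each other. -/
theorem critical_cubic_roots (n : ℕ) (hn : 2 ≤ n) :
    ∃ r : ℝ, 0 < r ∧ r < 1 ∧
      ∃ c : ℂ, c.im ≠ 0 ∧
        ∀ z : ℂ, 2*(n:ℂ)^3*z^3 + (n:ℂ)^2*(3*(n:ℂ)+5)*z^2 +
            (n:ℂ)*(2*(n:ℂ)^2+3*(n:ℂ)+4)*z - ((n:ℂ)^2 - 1) = 0 ↔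
          (z = (r:ℂ) ∨ z = c ∨ z = (starRingEnd ℂ) c) := by
  have hn' : (1 : ℝ) < n := by exact_mod_cast hn
  obtain ⟨r, ⟨hr0, hr1⟩, hroot⟩ := exists_critical_root_mem_Ioo hn'
  obtain ⟨c, hc, hroots⟩ := exists_cubic_eq_zero_iff_of_discrim_neg (by positivity) hroot
    (discrim_critical_cofactor_neg (by positivity) hr0.le)
  refine ⟨r, hr0, hr1, c, hc, fun z => ?_⟩
  rw [← hroots z]
  push_cast
  ring_nf
end
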